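/- arXiv:math/0611482 — 4 statements merged into one kernel-verified Lean document; each statement's English description precedes it below -/
import Mathlib

section
/- Let Ω be a domain in C, K ⊂ Ω compact, and z₀ ∈ Ω. Then there exists a constant r with 0 < r < 1 such that for every holomorphic function f on Ω with |f| < 1 on Ω that vanishes to order at least λ at z₀ (λ a positive integer), one has |f(z)| ≤ r^λ for all z ∈ K. -/
/-!
Near `z₀`, the Taylor expansion of `f` together with Cauchy's estimates gives `|f| ≤ 2⁻ᵏ` on a
small disc when `f` vanishes to order `k`. The set of points having a neighbourhood on which such
a uniform bound `rᵏ` (`r < 1`) holds is open, and it is relatively closed in `Ω` by Hadamard's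
three-circles theorem: the bound `qᵏ` on a small circle and the bound `1` on a larger disc give
`(q^α)ᵏ` on an intermediate disc. Since `Ω` is connected, every point of `Ω` has such a
neighbourhood, and finitely many of them cover `K`.
-/

open Metric Set Topology
open scoped Nat
open Complex.HadamardThreeLines (verticalStrip verticalClosedStrip)

theorem norm_le_of_iteratedDeriv_eq_zero {f : ℂ → ℂ} {c z : ℂ} {R : ℝ} {lam : ℕ}
    (hf : DiffContOnCl ℂ f (ball c R)) (hb : ∀ w ∈ sphere c R, ‖f w‖ ≤ 1)
    (hvan : ∀ ν < lam, iteratedDeriv ν f c = 0) (hz : z ∈ ball c R) :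
    ‖f z‖ ≤ (‖z - c‖ / R) ^ lam / (1 - ‖z - c‖ / R) := by
  have hR : 0 < R := pos_of_mem_ball hz
  set x := ‖z - c‖ / R
  have hx1 : x < 1 := (div_lt_one hR).2 (mem_ball_iff_norm.1 hz)
  set a : ℕ → ℂ := fun n ↦ (n ! : ℂ)⁻¹ • (z - c) ^ n • iteratedDeriv n f c
  have htail : HasSum (fun n ↦ a (n + lam)) (f z) := by
    rw [hasSum_nat_add_iff, Finset.sum_eq_zero fun n hn ↦ by
      simp [a, hvan n (Finset.mem_range.1 hn)], add_zero]
    exact Complex.hasSum_taylorSeries_on_ball hf.differentiableOn hz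
  have hcoeff (n : ℕ) : ‖a n‖ ≤ x ^ n := by
    have hcauchy := Complex.norm_iteratedDeriv_le_of_forall_mem_sphere_norm_le n hR hf hb
    calc ‖a n‖ = (n ! : ℝ)⁻¹ * ‖z - c‖ ^ n * ‖iteratedDeriv n f c‖ := by
          simp [a, mul_assoc]
      _ ≤ (n ! : ℝ)⁻¹ * ‖z - c‖ ^ n * (n ! * 1 / R ^ n) := by gcongr
      _ = x ^ n := by rw [div_pow]; field_simp
  have hgeom : HasSum (fun n ↦ x ^ (n + lam)) (x ^ lam / (1 - x)) := by
    simpa [pow_add, mul_comm, div_eq_mul_inv] using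
      (hasSum_geometric_of_lt_one (by positivity) hx1).mul_left (x ^ lam)
  exact htail.norm_le_of_bounded hgeom fun n ↦ hcoeff (n + lam)

theorem norm_le_rpow_of_mem_annulus {f : ℂ → ℂ} {c z : ℂ} {s S m : ℝ} (hs : 0 < s)
    (hsS : s < S) (hf : DiffContOnCl ℂ f (ball c S)) (hm : ∀ w ∈ sphere c s, ‖f w‖ ≤ m)
    (h1 : ∀ w ∈ closedBall c S, ‖f w‖ ≤ 1) (hsz : s ≤ ‖z - c‖) (hzS : ‖z - c‖ ≤ S) :
    ‖f z‖ ≤ m ^ (Real.log (S / ‖z - c‖) / Real.log (S / s)) := by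
  set L := Real.log (S / s)
  have hL : 0 < L := Real.log_pos ((one_lt_div hs).2 hsS)
  have hSs : Real.exp L = S / s := Real.exp_log (div_pos (hs.trans hsS) hs)
  set r := ‖z - c‖
  have hr : 0 < r := hs.trans_le hsz
  set a : ℂ := ((s / r : ℝ) : ℂ) * (z - c)
  have ha : ‖a‖ = s := by
    simp [a, r, abs_of_pos hs, div_mul_cancel₀ _ hr.ne']
  -- `ψ` maps the strip `0 < re < 1` into the annulus `s < ‖· - c‖ < S`, and `ψ x = z` for the
  -- real `x` below, so the three lines theorem for `f ∘ ψ` bounds `f z`.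
  set ψ : ℂ → ℂ := fun w ↦ c + a * Complex.exp (w * L)
  have hψ (w : ℂ) : dist (ψ w) c = s * Real.exp (w.re * L) := by
    simp [ψ, dist_eq_norm, ha, Complex.norm_exp]
  have hψ_le {w : ℂ} (hw : w.re ≤ 1) : dist (ψ w) c ≤ S := by
    rw [hψ, ← le_div_iff₀' hs, ← hSs, Real.exp_le_exp]
    nlinarith
  have hψ_lt {w : ℂ} (hw : w.re < 1) : dist (ψ w) c < S := by
    rw [hψ, ← lt_div_iff₀' hs, ← hSs, Real.exp_lt_exp]
    nlinarith
  have hg : DiffContOnCl ℂ (f ∘ ψ) (verticalStrip 0 1) :=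
    hf.comp (by fun_prop : Differentiable ℂ ψ).diffContOnCl fun w hw ↦ hψ_lt hw.2
  have hB : BddAbove ((norm ∘ f ∘ ψ) '' verticalClosedStrip 0 1) :=
    ⟨1, forall_mem_image.2 fun w hw ↦ h1 _ (hψ_le hw.2)⟩
  have hleft (w : ℂ) (hw : w ∈ Complex.re ⁻¹' {0}) : ‖(f ∘ ψ) w‖ ≤ m :=
    hm _ (by rw [mem_sphere, hψ, show w.re = 0 from hw, zero_mul, Real.exp_zero, mul_one])
  have hright (w : ℂ) (hw : w ∈ Complex.re ⁻¹' {1}) : ‖(f ∘ ψ) w‖ ≤ 1 :=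
    h1 _ (hψ_le (by simp_all))
  set x : ℝ := Real.log (r / s) / L
  have hx : (x : ℂ) ∈ verticalClosedStrip 0 1 := by
    change (x : ℂ).re ∈ Icc 0 1
    rw [Complex.ofReal_re]
    exact ⟨div_nonneg (Real.log_nonneg ((one_le_div hs).2 hsz)) hL.le,
      (div_le_one hL).2 (Real.log_le_log (div_pos hr hs) (by gcongr))⟩
  have hψx : ψ x = z := by
    have hxL : Real.exp (x * L) = r / s := by
      rw [div_mul_cancel₀ _ hL.ne', Real.exp_log (div_pos hr hs)]
    simp only [ψ, a, ← Complex.ofReal_mul, ← Complex.ofReal_exp, hxL]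
    have hs' : (s : ℂ) ≠ 0 := by exact_mod_cast hs.ne'
    have hr' : (r : ℂ) ≠ 0 := by exact_mod_cast hr.ne'
    push_cast
    field_simp
    ring
  have h1x : 1 - x = Real.log (S / r) / L := by
    rw [eq_div_iff hL.ne', sub_mul, div_mul_cancel₀ _ hL.ne', one_mul, Real.log_div hr.ne' hs.ne',
      Real.log_div (hs.trans hsS).ne' hr.ne',
      show L = Real.log S - Real.log s from Real.log_div (hs.trans hsS).ne' hs.ne']
    ring
  simpa [hψx, h1x] using
    Complex.HadamardThreeLines.norm_le_interp_of_mem_verticalClosedStrip₀₁' _ hx hg hB hleft hright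

theorem norm_le_rpow_of_mem_closedBall {f : ℂ → ℂ} {c z : ℂ} {s t S m : ℝ} (hs : 0 < s)
    (hst : s ≤ t) (htS : t < S) (hm0 : 0 < m) (hm1 : m ≤ 1) (hf : DiffContOnCl ℂ f (ball c S))
    (hm : ∀ w ∈ sphere c s, ‖f w‖ ≤ m) (h1 : ∀ w ∈ closedBall c S, ‖f w‖ ≤ 1)
    (hz : z ∈ closedBall c t) :
    ‖f z‖ ≤ m ^ (Real.log (S / t) / Real.log (S / s)) := by
  have ht : 0 < t := hs.trans_le hst
  have hS : 0 < S := ht.trans htS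
  have hL : 0 < Real.log (S / s) := Real.log_pos ((one_lt_div hs).2 (hst.trans_lt htS))
  rcases lt_or_ge ‖z - c‖ s with hzs | hsz
  · have hα : Real.log (S / t) / Real.log (S / s) ≤ 1 :=
      (div_le_one hL).2 (Real.log_le_log (div_pos hS ht) (by gcongr))
    calc ‖f z‖ ≤ m := by
          refine Complex.norm_le_of_forall_mem_frontier_norm_le isBounded_ball
            (hf.mono (ball_subset_ball (hst.trans htS.le))) (by rwa [frontier_ball c hs.ne']) ?_
          exact subset_closure (mem_ball_iff_norm.2 hzs)
      _ ≤ m ^ (Real.log (S / t) / Real.log (S / s)) := Real.self_le_rpow_of_le_one hm0.le hm1 hα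
  · have hzt : ‖z - c‖ ≤ t := mem_closedBall_iff_norm.1 hz
    calc ‖f z‖ ≤ m ^ (Real.log (S / ‖z - c‖) / Real.log (S / s)) :=
          norm_le_rpow_of_mem_annulus hs (hst.trans_lt htS) hf hm h1 hsz (hzt.trans htS.le)
      _ ≤ m ^ (Real.log (S / t) / Real.log (S / s)) := by
          refine Real.rpow_le_rpow_of_exponent_ge hm0 hm1 (div_le_div_of_nonneg_right ?_ hL.le)
          exact Real.log_le_log (div_pos hS ht)
            (div_le_div_of_nonneg_left hS.le (hs.trans_le hsz) hzt)

def HasUniformDecayOn (Ω : Set ℂ) (z₀ : ℂ) (S : Set ℂ) : Prop :=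
  ∃ r : ℝ, 0 < r ∧ r < 1 ∧ ∀ f : ℂ → ℂ, DifferentiableOn ℂ f Ω →
    (∀ z ∈ Ω, ‖f z‖ < 1) → ∀ lam : ℕ, 0 < lam →
    (∀ ν < lam, iteratedDeriv ν f z₀ = 0) → ∀ z ∈ S, ‖f z‖ ≤ r ^ lam

namespace HasUniformDecayOn

variable {Ω : Set ℂ} {z₀ : ℂ} {S T : Set ℂ}

theorem empty : HasUniformDecayOn Ω z₀ ∅ :=
  ⟨2⁻¹, by norm_num, by norm_num, fun _ _ _ _ _ _ _ h ↦ h.elim⟩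

theorem mono (h : HasUniformDecayOn Ω z₀ T) (hST : S ⊆ T) : HasUniformDecayOn Ω z₀ S :=
  let ⟨r, hr0, hr1, hr⟩ := h
  ⟨r, hr0, hr1, fun f hf hf1 lam hlam hvan z hz ↦ hr f hf hf1 lam hlam hvan z (hST hz)⟩

theorem union (hS : HasUniformDecayOn Ω z₀ S) (hT : HasUniformDecayOn Ω z₀ T) :
    HasUniformDecayOn Ω z₀ (S ∪ T) := by
  obtain ⟨r, hr0, hr1, hr⟩ := hS
  obtain ⟨q, hq0, hq1, hq⟩ := hT
  refine ⟨max r q, lt_max_of_lt_left hr0, max_lt hr1 hq1, ?_⟩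
  rintro f hf hf1 lam hlam hvan z (hz | hz)
  · exact (hr f hf hf1 lam hlam hvan z hz).trans (by gcongr; exact le_max_left r q)
  · exact (hq f hf hf1 lam hlam hvan z hz).trans (by gcongr; exact le_max_right r q)

theorem closedBall_center {R : ℝ} (hR : 0 < R) (hRΩ : closedBall z₀ R ⊆ Ω) :
    HasUniformDecayOn Ω z₀ (closedBall z₀ (R / 4)) := by
  refine ⟨2⁻¹, by norm_num, by norm_num, fun f hf hf1 lam hlam hvan z hz ↦ ?_⟩
  have hx : ‖z - z₀‖ / R ≤ 4⁻¹ := by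
    rw [div_le_iff₀ hR]
    linarith [mem_closedBall_iff_norm.1 hz]
  have hsmall : (4⁻¹ : ℝ) ^ lam / (1 - 4⁻¹) ≤ 2⁻¹ ^ lam := by
    obtain ⟨k, rfl⟩ := Nat.exists_eq_add_one_of_ne_zero hlam.ne'
    have : (4⁻¹ : ℝ) ^ k ≤ 2⁻¹ ^ k := by gcongr; norm_num
    rw [div_le_iff₀ (by norm_num), pow_succ, pow_succ]
    nlinarith [pow_nonneg (by norm_num : (0 : ℝ) ≤ 4⁻¹) k]
  calc ‖f z‖ ≤ (‖z - z₀‖ / R) ^ lam / (1 - ‖z - z₀‖ / R) :=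
        norm_le_of_iteratedDeriv_eq_zero (hf.diffContOnCl_ball hRΩ)
          (fun w hw ↦ (hf1 w (hRΩ (sphere_subset_closedBall hw))).le) hvan
          (closedBall_subset_ball (by linarith) hz)
    _ ≤ (4⁻¹ : ℝ) ^ lam / (1 - 4⁻¹) := by gcongr
    _ ≤ 2⁻¹ ^ lam := hsmall

theorem closedBall_of_sphere {c : ℂ} {s t S : ℝ} (hs : 0 < s) (hst : s ≤ t) (htS : t < S)
    (hSΩ : closedBall c S ⊆ Ω) (h : HasUniformDecayOn Ω z₀ (sphere c s)) :
    HasUniformDecayOn Ω z₀ (closedBall c t) := by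
  obtain ⟨q, hq0, hq1, hq⟩ := h
  set α := Real.log (S / t) / Real.log (S / s)
  have hα : 0 < α :=
    div_pos (Real.log_pos ((one_lt_div (hs.trans_le hst)).2 htS))
      (Real.log_pos ((one_lt_div hs).2 (hst.trans_lt htS)))
  refine ⟨q ^ α, Real.rpow_pos_of_pos hq0 α, Real.rpow_lt_one hq0.le hq1 hα,
    fun f hf hf1 lam hlam hvan z hz ↦ ?_⟩
  calc ‖f z‖ ≤ (q ^ lam) ^ α :=
        norm_le_rpow_of_mem_closedBall hs hst htS (pow_pos hq0 lam) (pow_le_one₀ hq0.le hq1.le)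
          (hf.diffContOnCl_ball hSΩ) (hq f hf hf1 lam hlam hvan)
          (fun w hw ↦ (hf1 w (hSΩ hw)).le) hz
    _ = (q ^ α) ^ lam := by
        rw [← Real.rpow_natCast_mul hq0.le, ← Real.rpow_mul_natCast hq0.le, mul_comm]

theorem exists_mem_nhds_of_mem_closure (hΩ : IsOpen Ω) {w : ℂ} (hw : w ∈ Ω)
    (hcl : w ∈ closure {v | ∃ t ∈ 𝓝 v, HasUniformDecayOn Ω z₀ t}) :
    ∃ t ∈ 𝓝 w, HasUniformDecayOn Ω z₀ t := by
  obtain ⟨ε, hε, hεΩ⟩ := Metric.isOpen_iff.1 hΩ w hw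
  set d := ε / 5
  have hd : 0 < d := by positivity
  have h5d : 5 * d = ε := by simp only [d]; ring
  obtain ⟨v, ⟨t, ht, hvt⟩, hwv⟩ := Metric.mem_closure_iff.1 hcl d hd
  obtain ⟨s, hs, hst⟩ := nhds_basis_closedBall.mem_iff.1 ht
  have hsphere : HasUniformDecayOn Ω z₀ (sphere v (min s d)) :=
    hvt.mono (sphere_subset_closedBall.trans
      ((closedBall_subset_closedBall (min_le_left s d)).trans hst))
  have hvΩ : closedBall v (4 * d) ⊆ Ω := fun z hz ↦ hεΩ <| by
    rw [mem_ball]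
    linarith [dist_triangle z v w, mem_closedBall.1 hz, dist_comm w v]
  refine ⟨closedBall v (2 * d), closedBall_mem_nhds_of_mem ?_, hsphere.closedBall_of_sphere
    (lt_min hs hd) ((min_le_right s d).trans (by linarith)) (by linarith) hvΩ⟩
  rw [mem_ball]
  linarith

end HasUniformDecayOn

/-- Schwarz-type lemma: a bounded holomorphic function vanishing to order λ at z₀
is bounded by r^λ on a compact subset. -/
theorem stmt_1 (Ω : Set ℂ) (hΩ : IsOpen Ω) (hconn : IsConnected Ω)
    (K : Set ℂ) (hK : IsCompact K) (hKΩ : K ⊆ Ω) (z₀ : ℂ) (hz₀ : z₀ ∈ Ω) :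
    ∃ r : ℝ, 0 < r ∧ r < 1 ∧ ∀ f : ℂ → ℂ, DifferentiableOn ℂ f Ω →
      (∀ z ∈ Ω, ‖f z‖ < 1) → ∀ lam : ℕ, 0 < lam →
      (∀ ν < lam, iteratedDeriv ν f z₀ = 0) → ∀ z ∈ K, ‖f z‖ ≤ r ^ lam := by
  set G := {w | ∃ t ∈ 𝓝 w, HasUniformDecayOn Ω z₀ t}
  have hG : IsOpen G := isOpen_iff_mem_nhds.2 fun w ⟨t, ht, h⟩ ↦
    (eventually_mem_nhds_iff.2 ht).mono fun v hv ↦ ⟨t, hv, h⟩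
  have hz₀G : z₀ ∈ G := by
    obtain ⟨R, hR, hRΩ⟩ := nhds_basis_closedBall.mem_iff.1 (hΩ.mem_nhds hz₀)
    exact ⟨_, closedBall_mem_nhds z₀ (by positivity), .closedBall_center hR hRΩ⟩
  have hΩG : Ω ⊆ G := hconn.isPreconnected.subset_of_closure_inter_subset hG ⟨z₀, hz₀, hz₀G⟩
    fun w ⟨hwG, hwΩ⟩ ↦ HasUniformDecayOn.exists_mem_nhds_of_mem_closure hΩ hwΩ hwG
  refine hK.induction_on (p := HasUniformDecayOn Ω z₀) .empty (fun _ _ hST h ↦ h.mono hST)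
    (fun _ _ hS hT ↦ hS.union hT) fun x hx ↦ ?_
  obtain ⟨t, ht, h⟩ := hΩG (hKΩ hx)
  exact ⟨t, mem_nhdsWithin_of_mem_nhds ht, h⟩
end

section
/- Let G be a unit polynomial in one complex variable z of degree k ≥ 1, and let α > 0. Then the two-dimensional Lebesgue measure of the set Λ = { z in the open unit disk Δ : |G(z)| ≤ α^k } satisfies m(Λ) ≤ 48 α. -/
/-!
If `|G| ≥ 1` at a point `w` of the unit circle (Cauchy's estimate applied to a coefficient of
modulus one), compare `|G(w)|` with `|G(z)|` root by root: a root `a` with `|a| ≤ 2` has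
`|w - a| ≤ 3`, while a farther root has `|w - a| ≤ 3 |z - a|` for `|z| ≤ 1`. Hence on the sublevel
set the product of `|z - a|` over the near roots is at most `(3α)^k`. Projecting onto the
imaginary axis reduces this to a Cartan-type estimate on the line: the set where
`∏ |y - tᵢ| ≤ εⁿ` has length at most `2eε`, by Markov's inequality applied to
`∑ log⁺ (eε / |y - tᵢ|)`, each term of which has integral `2eε`.
-/

open MeasureTheory Metric Real Finset Polynomial
open scoped ENNReal

theorem abs_lt_mul_exp_neg_of_lt_posLog_div {c s y : ℝ} (hc : 0 < c) (hs : 0 < s)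
    (h : s < log⁺ (c / |y|)) : |y| < c * exp (-s) := by
  have hlog : s < log (c / |y|) := (lt_max_iff.1 h).resolve_left hs.not_gt
  have hy : 0 < |y| := abs_pos.2 fun hy ↦ by simp [hy] at hlog; linarith
  rw [lt_log_iff_exp_lt (by positivity), lt_div_iff₀ hy] at hlog
  rw [exp_neg, ← div_eq_mul_inv, lt_div_iff₀ (exp_pos s)]
  linarith

theorem lintegral_ofReal_posLog_div_abs_sub_le (t : ℝ) {c : ℝ} (hc : 0 < c) :
    ∫⁻ y : ℝ, ENNReal.ofReal (log⁺ (c / |y - t|)) ≤ ENNReal.ofReal (2 * c) := by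
  have hmeas : Measurable fun y : ℝ ↦ log⁺ (c / |y|) := by fun_prop
  rw [lintegral_sub_right_eq_self (fun y ↦ ENNReal.ofReal (log⁺ (c / |y|))) t,
    lintegral_eq_lintegral_meas_lt _ (ae_of_all _ fun _ ↦ posLog_nonneg) hmeas.aemeasurable]
  have hlevel : ∀ s ∈ Set.Ioi (0 : ℝ),
      volume {y : ℝ | s < log⁺ (c / |y|)} ≤ ENNReal.ofReal (2 * c * exp (-s)) := fun s hs ↦ by
    rw [mul_assoc, ← Real.volume_ball 0]
    exact measure_mono fun y hy ↦ by simpa using abs_lt_mul_exp_neg_of_lt_posLog_div hc hs hy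
  have hint : IntegrableOn (fun s : ℝ ↦ 2 * c * exp (-s)) (Set.Ioi 0) := by
    simpa [IntegrableOn] using (exp_neg_integrableOn_Ioi 0 one_pos).const_mul (2 * c)
  calc ∫⁻ s in Set.Ioi 0, volume {y : ℝ | s < log⁺ (c / |y|)}
      ≤ ∫⁻ s in Set.Ioi 0, ENNReal.ofReal (2 * c * exp (-s)) :=
        setLIntegral_mono' measurableSet_Ioi hlevel
    _ = ENNReal.ofReal (2 * c) := by
        rw [← ofReal_integral_eq_lintegral_ofReal hint (ae_of_all _ fun _ ↦ by positivity),
          integral_const_mul, integral_exp_neg_Ioi_zero, mul_one]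

theorem card_le_sum_posLog_div_of_prod_abs_sub_le {ι : Type*} (s : Finset ι) (t : ι → ℝ)
    {ε y : ℝ} (hε : 0 < ε) (hy : ∀ i ∈ s, y ≠ t i) (hprod : ∏ i ∈ s, |y - t i| ≤ ε ^ #s) :
    (#s : ℝ) ≤ ∑ i ∈ s, log⁺ (exp 1 * ε / |y - t i|) := by
  have hpos : 0 < ∏ i ∈ s, |y - t i| :=
    prod_pos fun i hi ↦ abs_pos.2 (sub_ne_zero.2 (hy i hi))
  calc (#s : ℝ) = log ((exp 1 * ε) ^ #s / ε ^ #s) := by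
        rw [← div_pow, mul_div_cancel_right₀ _ hε.ne', ← exp_nat_mul, log_exp, mul_one]
    _ ≤ log (∏ i ∈ s, exp 1 * ε / |y - t i|) := by
        rw [prod_div_distrib, prod_const]
        exact log_le_log (by positivity) (div_le_div_of_nonneg_left (by positivity) hpos hprod)
    _ ≤ log⁺ (∏ i ∈ s, exp 1 * ε / |y - t i|) := le_max_right _ _
    _ ≤ ∑ i ∈ s, log⁺ (exp 1 * ε / |y - t i|) := posLog_prod _ _

theorem volume_setOf_prod_abs_sub_le_pow_le {ι : Type*} {s : Finset ι} (hs : s.Nonempty)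
    (t : ι → ℝ) {ε : ℝ} (hε : 0 < ε) :
    volume {y : ℝ | ∏ i ∈ s, |y - t i| ≤ ε ^ #s} ≤ ENNReal.ofReal (2 * exp 1 * ε) := by
  set c := exp 1 * ε
  set f : ℝ → ℝ≥0∞ := fun y ↦ ∑ i ∈ s, ENNReal.ofReal (log⁺ (c / |y - t i|))
  have hf : Measurable f := by fun_prop
  have hsub : {y : ℝ | ∏ i ∈ s, |y - t i| ≤ ε ^ #s} ⊆ {y | (#s : ℝ≥0∞) ≤ f y} ∪ t '' s := by
    intro y hy
    by_cases hyt : ∀ i ∈ s, y ≠ t i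
    · left
      change _ ≤ ∑ i ∈ s, ENNReal.ofReal _
      rw [← ENNReal.ofReal_natCast, ← ENNReal.ofReal_sum_of_nonneg fun _ _ ↦ posLog_nonneg]
      exact ENNReal.ofReal_le_ofReal (card_le_sum_posLog_div_of_prod_abs_sub_le s t hε hyt hy)
    · -- at `y = t i` the junk value `c / 0 = 0` breaks the bound, but these points are null
      push Not at hyt
      obtain ⟨i, hi, rfl⟩ := hyt
      exact Or.inr ⟨i, hi, rfl⟩
  have hmarkov : (#s : ℝ≥0∞) * volume {y | (#s : ℝ≥0∞) ≤ f y} ≤ #s * ENNReal.ofReal (2 * c) :=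
    calc _ ≤ ∫⁻ y, f y := mul_meas_ge_le_lintegral₀ hf.aemeasurable _
      _ = ∑ i ∈ s, ∫⁻ y, ENNReal.ofReal (log⁺ (c / |y - t i|)) :=
        lintegral_finsetSum _ fun _ _ ↦ by fun_prop
      _ ≤ ∑ i ∈ s, ENNReal.ofReal (2 * c) :=
        sum_le_sum fun i _ ↦ lintegral_ofReal_posLog_div_abs_sub_le (t i) (by positivity)
      _ = #s * ENNReal.ofReal (2 * c) := by rw [sum_const, nsmul_eq_mul]
  calc volume {y : ℝ | ∏ i ∈ s, |y - t i| ≤ ε ^ #s}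
      ≤ volume {y | (#s : ℝ≥0∞) ≤ f y} + volume (t '' s) :=
        (measure_mono hsub).trans (measure_union_le _ _)
    _ = volume {y | (#s : ℝ≥0∞) ≤ f y} := by
      rw [(s.finite_toSet.image t).measure_zero, add_zero]
    _ ≤ ENNReal.ofReal (2 * exp 1 * ε) := by
      rw [mul_assoc]
      exact (ENNReal.mul_le_mul_iff_right (by simpa using hs.ne_empty) (by simp)).1 hmarkov

theorem volume_ball_sep_prod_norm_sub_le_pow_le {ι : Type*} {s : Finset ι} (hs : s.Nonempty)
    (a : ι → ℂ) {ε : ℝ} (hε : 0 < ε) :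
    volume {z ∈ ball (0 : ℂ) 1 | ∏ i ∈ s, ‖z - a i‖ ≤ ε ^ #s}
      ≤ ENNReal.ofReal (4 * exp 1 * ε) := by
  set E := {y : ℝ | ∏ i ∈ s, |y - (a i).im| ≤ ε ^ #s}
  have hsub : {z ∈ ball (0 : ℂ) 1 | ∏ i ∈ s, ‖z - a i‖ ≤ ε ^ #s}
      ⊆ Complex.measurableEquivRealProd ⁻¹' (Set.Ioo (-1) 1 ×ˢ E) := by
    rintro z ⟨hz, hprod⟩
    have hre : |z.re| < 1 := (Complex.abs_re_le_norm z).trans_lt (mem_ball_zero_iff.1 hz)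
    refine ⟨abs_lt.1 hre, le_trans (prod_le_prod (fun _ _ ↦ abs_nonneg _) fun i _ ↦ ?_) hprod⟩
    simpa using Complex.abs_im_le_norm (z - a i)
  calc _ ≤ volume (Set.Ioo (-1 : ℝ) 1 ×ˢ E) :=
        (measure_mono hsub).trans_eq
          (Complex.volume_preserving_equiv_real_prod.measure_preimage_equiv _)
    _ = ENNReal.ofReal 2 * volume E := by
        rw [Measure.volume_eq_prod, Measure.prod_prod, Real.volume_Ioo]
        norm_num
    _ ≤ ENNReal.ofReal 2 * ENNReal.ofReal (2 * exp 1 * ε) :=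
        mul_le_mul_right (volume_setOf_prod_abs_sub_le_pow_le hs _ hε) _
    _ = ENNReal.ofReal (4 * exp 1 * ε) := by
        rw [← ENNReal.ofReal_mul zero_le_two]
        ring_nf

theorem Polynomial.iteratedDeriv_eval {𝕜 : Type*} [NontriviallyNormedField 𝕜] (p : 𝕜[X]) (n : ℕ)
    (x : 𝕜) : iteratedDeriv n (fun x ↦ p.eval x) x = (derivative^[n] p).eval x := by
  induction n generalizing x with
  | zero => simp
  | succ n ih =>
    rw [iteratedDeriv_succ, _root_.funext ih, Function.iterate_succ_apply']
    exact Polynomial.deriv _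

theorem Polynomial.norm_coeff_le_of_forall_mem_sphere_norm_eval_le (p : ℂ[X]) {C : ℝ}
    (hC : ∀ z ∈ sphere (0 : ℂ) 1, ‖p.eval z‖ ≤ C) (j : ℕ) : ‖p.coeff j‖ ≤ C := by
  have hcauchy := Complex.norm_iteratedDeriv_le_of_forall_mem_sphere_norm_le j one_pos
    p.differentiable.diffContOnCl hC
  have hderiv : iteratedDeriv j (fun z ↦ p.eval z) 0 = j.factorial * p.coeff j := by
    rw [iteratedDeriv_eval, ← coeff_zero_eq_eval_zero, coeff_iterate_derivative, zero_add,
      Nat.descFactorial_self, nsmul_eq_mul]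
  rw [hderiv, norm_mul, one_pow, div_one, Complex.norm_natCast] at hcauchy
  exact le_of_mul_le_mul_left hcauchy (by positivity)

theorem Polynomial.exists_mem_sphere_norm_coeff_le_norm_eval (p : ℂ[X]) (j : ℕ) :
    ∃ w ∈ sphere (0 : ℂ) 1, ‖p.coeff j‖ ≤ ‖p.eval w‖ := by
  obtain ⟨w, hw, hmax⟩ := (isCompact_sphere (0 : ℂ) 1).exists_isMaxOn
    (NormedSpace.sphere_nonempty.2 zero_le_one) p.continuous.norm.continuousOn
  exact ⟨w, hw, p.norm_coeff_le_of_forall_mem_sphere_norm_eval_le hmax j⟩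

theorem Polynomial.norm_eval_eq_norm_leadingCoeff_mul_prod (p : ℂ[X]) (x : ℂ) :
    ‖p.eval x‖ = ‖p.leadingCoeff‖ * ∏ r ∈ p.roots.toEnumFinset, ‖x - r.1‖ := by
  rw [(IsAlgClosed.splits p).eval_eq_prod_roots, norm_mul, ← Complex.norm_prod, ← prod_map_val]
  conv_lhs => rw [← Multiset.map_toEnumFinset_fst p.roots, Multiset.map_map]
  rfl

theorem Polynomial.card_toEnumFinset_roots (p : ℂ[X]) :
    #p.roots.toEnumFinset = p.natDegree := by
  rw [Multiset.card_toEnumFinset, IsAlgClosed.card_roots_eq_natDegree]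

theorem norm_sub_mul_ite_le {E : Type*} [SeminormedAddCommGroup E] {w z : E} (hw : ‖w‖ ≤ 1)
    (hz : ‖z‖ ≤ 1) (a : E) : ‖w - a‖ * (if ‖a‖ ≤ 2 then ‖z - a‖ else 1) ≤ 3 * ‖z - a‖ := by
  have hwa := norm_sub_le w a
  split_ifs with ha
  · exact mul_le_mul_of_nonneg_right (by linarith) (norm_nonneg _)
  · have hza := norm_sub_norm_le a z
    rw [norm_sub_rev] at hza
    linarith

theorem Polynomial.norm_eval_mul_prod_near_roots_le (p : ℂ[X]) {w z : ℂ} (hw : ‖w‖ ≤ 1)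
    (hz : ‖z‖ ≤ 1) :
    ‖p.eval w‖ * ∏ r ∈ p.roots.toEnumFinset with ‖r.1‖ ≤ 2, ‖z - r.1‖
      ≤ 3 ^ p.natDegree * ‖p.eval z‖ := by
  calc ‖p.eval w‖ * ∏ r ∈ p.roots.toEnumFinset with ‖r.1‖ ≤ 2, ‖z - r.1‖
      = ‖p.leadingCoeff‖ * ∏ r ∈ p.roots.toEnumFinset,
          ‖w - r.1‖ * (if ‖r.1‖ ≤ 2 then ‖z - r.1‖ else 1) := by
        rw [norm_eval_eq_norm_leadingCoeff_mul_prod, prod_filter, mul_assoc, prod_mul_distrib]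
    _ ≤ ‖p.leadingCoeff‖ * ∏ r ∈ p.roots.toEnumFinset, 3 * ‖z - r.1‖ := by
        refine mul_le_mul_of_nonneg_left (prod_le_prod (fun r _ ↦ ?_) fun r _ ↦ ?_) (norm_nonneg _)
        · positivity
        · exact norm_sub_mul_ite_le hw hz r.1
    _ = 3 ^ p.natDegree * ‖p.eval z‖ := by
        rw [prod_mul_distrib, prod_const, card_toEnumFinset_roots,
          norm_eval_eq_norm_leadingCoeff_mul_prod]
        ring

theorem Polynomial.prod_norm_sub_near_roots_le (p : ℂ[X]) {j : ℕ} (hj : 1 ≤ ‖p.coeff j‖) {z : ℂ}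
    (hz : ‖z‖ ≤ 1) :
    ∏ r ∈ p.roots.toEnumFinset with ‖r.1‖ ≤ 2, ‖z - r.1‖ ≤ 3 ^ p.natDegree * ‖p.eval z‖ := by
  obtain ⟨w, hw, hpw⟩ := p.exists_mem_sphere_norm_coeff_le_norm_eval j
  exact (le_mul_of_one_le_left (by positivity) (hj.trans hpw)).trans
    (p.norm_eval_mul_prod_near_roots_le (mem_sphere_zero_iff_norm.1 hw).le hz)

/-- The sublevel set {|G| ≤ α^k} of a unit polynomial of degree k in the unit disk
has measure at most 48α. -/
theorem stmt_4 (k : ℕ) (hk : 1 ≤ k) (G : Polynomial ℂ) (hdeg : G.natDegree = k)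
    (hunit : (∀ j, ‖G.coeff j‖ ≤ 1) ∧ ∃ j, ‖G.coeff j‖ = 1)
    (α : ℝ) (hα : 0 < α) :
    volume {z ∈ Metric.ball (0 : ℂ) 1 | ‖G.eval z‖ ≤ α ^ k} ≤ ENNReal.ofReal (48 * α) := by
  obtain ⟨-, j, hj⟩ := hunit
  rcases le_or_gt (1 / 3) α with hα3 | hα3
  · refine (measure_mono (Set.sep_subset _ _)).trans ?_
    rw [Complex.volume_ball, ENNReal.ofReal_one, one_pow, one_mul, ← ENNReal.ofReal_coe_nnreal]
    exact ENNReal.ofReal_le_ofReal (by simp; linarith [pi_lt_d2])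
  set s := G.roots.toEnumFinset.filter fun r ↦ ‖r.1‖ ≤ 2
  have hkey : ∀ z ∈ ball (0 : ℂ) 1, ‖G.eval z‖ ≤ α ^ k → ∏ r ∈ s, ‖z - r.1‖ ≤ (3 * α) ^ k :=
    fun z hz hGz ↦ calc
      _ ≤ 3 ^ k * ‖G.eval z‖ :=
        hdeg ▸ G.prod_norm_sub_near_roots_le hj.ge (mem_ball_zero_iff.1 hz).le
      _ ≤ (3 * α) ^ k := by rw [mul_pow]; gcongr
  obtain hs | hs := s.eq_empty_or_nonempty
  · have hempty : {z ∈ ball (0 : ℂ) 1 | ‖G.eval z‖ ≤ α ^ k} = ∅ :=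
      Set.eq_empty_of_forall_notMem fun z ⟨hz, hGz⟩ ↦ by
        have h1 := hkey z hz hGz
        rw [hs, prod_empty] at h1
        exact (pow_lt_one₀ (by positivity) (by linarith) (by omega)).not_ge h1
    rw [hempty, measure_empty]
    exact zero_le
  have hcard : #s ≤ k := (card_filter_le _ _).trans_eq (hdeg ▸ G.card_toEnumFinset_roots)
  calc _ ≤ volume {z ∈ ball (0 : ℂ) 1 | ∏ r ∈ s, ‖z - r.1‖ ≤ (3 * α) ^ #s} :=
        measure_mono fun z hz ↦ ⟨hz.1, (hkey z hz.1 hz.2).trans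
          (pow_le_pow_of_le_one (by positivity) (by linarith) hcard)⟩
    _ ≤ ENNReal.ofReal (4 * exp 1 * (3 * α)) :=
        volume_ball_sep_prod_norm_sub_le_pow_le hs _ (by positivity)
    _ ≤ ENNReal.ofReal (48 * α) :=
        ENNReal.ofReal_le_ofReal (by nlinarith [exp_one_lt_d9])
end

section
/- Let e be a positive integer, S ⊂ C a set, and suppose there exist a sequence of positive integers d_j → ∞, a constant 0 < r₀ < 1, and unit polynomials B_j of degree ≤ e such that |B_j(w)| ≤ r₀^{d_j e / 2} for every w ∈ S and every j. Then S has at most e elements. -/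
/-- If unit polynomials of degree ≤ e are uniformly exponentially small on S with
exponents d_j → ∞, then S has at most e elements. -/
theorem stmt_7 (e : ℕ) (he : 0 < e) (S : Set ℂ) (d : ℕ → ℕ)
    (hd : Filter.Tendsto d Filter.atTop Filter.atTop)
    (r₀ : ℝ) (h0 : 0 < r₀) (h1 : r₀ < 1)
    (B : ℕ → Polynomial ℂ)
    (hdeg : ∀ j, (B j).natDegree ≤ e)
    (hunit : ∀ j, (∀ i, ‖(B j).coeff i‖ ≤ 1) ∧ ∃ i, ‖(B j).coeff i‖ = 1)
    (hbound : ∀ w ∈ S, ∀ j, ‖(B j).eval w‖ ≤ r₀ ^ ((d j * e : ℝ) / 2)) :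
    S.Finite ∧ S.ncard ≤ e := by
  have key : ∀ T : Finset ℂ, ↑T ⊆ S → T.card ≤ e := by
    intro T₀ hT₀S
    by_contra hcard
    push_neg at hcard
    obtain ⟨T, hTsub, hTcard⟩ := Finset.exists_subset_card_eq (Nat.succ_le_of_lt hcard)
    have hTS : (↑T : Set ℂ) ⊆ S := fun x hx => hT₀S (hTsub hx)
    set M : ℝ := ∑ w ∈ T, ∑ i ∈ Finset.range (e + 1), ‖(Lagrange.basis T id w).coeff i‖ with hM
    have hM0 : 0 ≤ M :=
      Finset.sum_nonneg fun _ _ => Finset.sum_nonneg fun _ _ => norm_nonneg _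
    -- the exponent tends to infinity
    have h2 : Filter.Tendsto (fun j : ℕ => ((d j * e : ℝ) / 2)) Filter.atTop Filter.atTop := by
      apply Filter.Tendsto.atTop_div_const (by norm_num : (0:ℝ) < 2)
      have hdr : Filter.Tendsto (fun j => (d j : ℝ)) Filter.atTop Filter.atTop :=
        tendsto_natCast_atTop_atTop.comp hd
      have := hdr.atTop_mul_const (by exact_mod_cast he : (0:ℝ) < (e:ℝ))
      simpa using this
    have htend : Filter.Tendsto (fun j => r₀ ^ ((d j * e : ℝ) / 2)) Filter.atTop (nhds 0) :=
      (tendsto_rpow_atTop_of_base_lt_one r₀ (by linarith) h1).comp h2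
    have hev : ∀ᶠ j in Filter.atTop, r₀ ^ ((d j * e : ℝ) / 2) < 1 / (M + 1) :=
      htend.eventually_lt_const (by positivity)
    obtain ⟨j, hj⟩ := hev.exists
    -- Lagrange interpolation representation
    have hinj : Set.InjOn (id : ℂ → ℂ) (↑T : Set ℂ) := Function.injective_id.injOn
    have hdlt : (B j).degree < (T.card : WithBot ℕ) := by
      calc (B j).degree ≤ ((B j).natDegree : WithBot ℕ) := Polynomial.degree_le_natDegree
        _ < (T.card : WithBot ℕ) := by
            rw [hTcard]
            exact_mod_cast Nat.lt_succ_of_le (hdeg j)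
    have hrep : B j = Lagrange.interpolate T id fun w => (B j).eval (id w) :=
      Lagrange.eq_interpolate hinj hdlt
    -- find the unit coefficient
    obtain ⟨i₀, hi₀⟩ := (hunit j).2
    have hBne : (B j).coeff i₀ ≠ 0 := by
      intro h; rw [h, norm_zero] at hi₀; norm_num at hi₀
    have hi₀le : i₀ < e + 1 :=
      Nat.lt_succ_of_le (le_trans (Polynomial.le_natDegree_of_ne_zero hBne) (hdeg j))
    -- bound the coefficient
    have hcoeff : (B j).coeff i₀ = ∑ w ∈ T, (B j).eval w * (Lagrange.basis T id w).coeff i₀ := by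
      conv_lhs => rw [hrep]
      rw [Lagrange.interpolate_apply, Polynomial.finset_sum_coeff]
      exact Finset.sum_congr rfl fun w _ => by rw [Polynomial.coeff_C_mul]; rfl
    have hbnd : ‖(B j).coeff i₀‖ ≤ r₀ ^ ((d j * e : ℝ) / 2) * M := by
      rw [hcoeff]
      calc ‖∑ w ∈ T, (B j).eval w * (Lagrange.basis T id w).coeff i₀‖
          ≤ ∑ w ∈ T, ‖(B j).eval w * (Lagrange.basis T id w).coeff i₀‖ := norm_sum_le _ _
        _ ≤ ∑ w ∈ T, r₀ ^ ((d j * e : ℝ) / 2) * ‖(Lagrange.basis T id w).coeff i₀‖ := by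
            refine Finset.sum_le_sum fun w hw => ?_
            rw [norm_mul]
            exact mul_le_mul_of_nonneg_right (hbound w (hTS hw) j) (norm_nonneg _)
        _ = r₀ ^ ((d j * e : ℝ) / 2) * ∑ w ∈ T, ‖(Lagrange.basis T id w).coeff i₀‖ := by
            rw [Finset.mul_sum]
        _ ≤ r₀ ^ ((d j * e : ℝ) / 2) * M := by
            refine mul_le_mul_of_nonneg_left ?_ (by positivity)
            rw [hM]
            refine Finset.sum_le_sum fun w hw => ?_
            exact Finset.single_le_sum (f := fun i => ‖(Lagrange.basis T id w).coeff i‖)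
              (fun i _ => norm_nonneg _) (Finset.mem_range.mpr hi₀le)
    have : (1:ℝ) ≤ r₀ ^ ((d j * e : ℝ) / 2) * M := hi₀ ▸ hbnd
    have hlt : r₀ ^ ((d j * e : ℝ) / 2) * M < 1 := by
      calc r₀ ^ ((d j * e : ℝ) / 2) * M ≤ r₀ ^ ((d j * e : ℝ) / 2) * (M + 1) := by
            refine mul_le_mul_of_nonneg_left (by linarith) (by positivity)
        _ < (1 / (M + 1)) * (M + 1) := by
            refine mul_lt_mul_of_pos_right hj (by linarith)
        _ = 1 := by field_simp
    linarith
  have hfin : S.Finite := by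
    by_contra hinf
    obtain ⟨T, hTS, hTcard⟩ := Set.Infinite.exists_subset_card_eq hinf (e + 1)
    have := key T hTS
    omega
  refine ⟨hfin, ?_⟩
  have h := key hfin.toFinset (by simp)
  rwa [← Set.ncard_coe_finset, hfin.coe_toFinset] at h
end

section
/- Let Ω be a bounded plane domain, K ⊂ Ω compact, N a positive integer, and f_k, g_k holomorphic on Ω for k = 1,…,N. Then there exist 0 < r < 1 and C > 0 such that for every pair of positive integers (d,e) with d+e > N, there is a unit polynomial F of bidegree (d,e) with sup_K |F(f_k(ζ), g_k(ζ))| ≤ C^{d+e} r^{de/N} for every k = 1,…,N. -/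
/-!
Cover `K` by finitely many discs `B(j, δ/2)` centred in `K`, say `p - 1` of them, with every
`B(j, δ)` inside a compact neighbourhood of `K` in `Ω` on which all `|f_k|, |g_k| ≤ A`.
Requiring each `F(f_k, g_k)` to vanish to order `s = ⌊de / (Np)⌋` at each centre imposes at most
`de < (d+1)(e+1)` linear conditions on the coefficients of `F`, so a nonzero solution exists and
can be scaled to a unit polynomial. On `B(j, δ)` the composite is bounded by
`(d+1)(e+1) A^(d+e)`, and a function vanishing to order `s` at `j` loses a factor `2^(-s)` on the
half disc (Cauchy estimates on its Taylor tail). Since `2^(-s) ≤ 2 · (2^(-1/p))^(de/N)`, this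
gives `r = 2^(-1/p)` and `C = 8A`.
-/

open Metric Finset MvPolynomial

theorem norm_le_of_iteratedDeriv_eq_zero_s13 {E : Type*} [NormedAddCommGroup E] [NormedSpace ℂ E]
    [CompleteSpace E] {h : ℂ → E} {c ζ : ℂ} {R M ρ : ℝ} {s : ℕ} (hR : 0 < R)
    (hh : DifferentiableOn ℂ h (closedBall c R)) (hM : ∀ z ∈ sphere c R, ‖h z‖ ≤ M)
    (hs : ∀ n < s, iteratedDeriv n h c = 0) (hρ : ρ < 1) (hζ : ‖ζ - c‖ ≤ ρ * R) :
    ‖h ζ‖ ≤ M * ρ ^ s / (1 - ρ) := by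
  have hρ0 : 0 ≤ ρ := nonneg_of_mul_nonneg_left ((norm_nonneg _).trans hζ) hR
  have hζR : ζ ∈ ball c R := mem_ball_iff_norm.2 (hζ.trans_lt (by nlinarith))
  have htail := (hasSum_nat_add_iff' s).2
    (Complex.hasSum_taylorSeries_on_ball (hh.mono ball_subset_closedBall) hζR)
  rw [sum_eq_zero fun n hn => by rw [hs n (mem_range.1 hn), smul_zero, smul_zero],
    sub_zero] at htail
  have hterm (n : ℕ) :
      ‖((n + s).factorial : ℂ)⁻¹ • (ζ - c) ^ (n + s) • iteratedDeriv (n + s) h c‖ ≤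
        M * ρ ^ s * ρ ^ n := by
    have hcauchy := Complex.norm_iteratedDeriv_le_of_forall_mem_sphere_norm_le (n + s) hR
      (hh.diffContOnCl_ball subset_rfl) hM
    rw [norm_smul, norm_smul, norm_inv, norm_pow, Complex.norm_natCast]
    calc ((n + s).factorial : ℝ)⁻¹ * (‖ζ - c‖ ^ (n + s) * ‖iteratedDeriv (n + s) h c‖)
        ≤ ((n + s).factorial : ℝ)⁻¹ *
            ((ρ * R) ^ (n + s) * ((n + s).factorial * M / R ^ (n + s))) := by
          gcongr
      _ = M * ρ ^ s * ρ ^ n := by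
          field_simp
          ring
  simpa [div_eq_mul_inv] using
    htail.norm_le_of_bounded ((hasSum_geometric_of_lt_one hρ0 hρ).mul_left (M * ρ ^ s)) hterm

/-- The paper's *unit polynomial*, not a unit of the ring `MvPolynomial σ 𝕜`. -/
def IsUnitPolynomial {σ 𝕜 : Type*} [NormedField 𝕜] (F : MvPolynomial σ 𝕜) : Prop :=
  (∀ m, ‖F.coeff m‖ ≤ 1) ∧ ∃ m, ‖F.coeff m‖ = 1

section UnitPolynomial

variable {σ 𝕜 : Type*}

theorem exists_smul_isUnitPolynomial [NormedField 𝕜] {F : MvPolynomial σ 𝕜} (hF : F ≠ 0) :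
    ∃ a : 𝕜, IsUnitPolynomial (a • F) := by
  obtain ⟨m₀, hm₀, hmax⟩ := F.support.exists_max_image (‖F.coeff ·‖) (support_nonempty.2 hF)
  have hpos : 0 < ‖F.coeff m₀‖ := norm_pos_iff.2 (mem_support_iff.1 hm₀)
  refine ⟨(F.coeff m₀)⁻¹, fun m => ?_, m₀, ?_⟩
  · rw [coeff_smul, smul_eq_mul, norm_mul, norm_inv, inv_mul_le_one₀ hpos]
    by_cases hm : m ∈ F.support
    · exact hmax m hm
    · rw [notMem_support_iff.1 hm, norm_zero]
      exact hpos.le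
  · rw [coeff_smul, smul_eq_mul, norm_mul, norm_inv, inv_mul_cancel₀ hpos.ne']

theorem exists_isUnitPolynomial_iteratedDeriv_eq_zero [NontriviallyNormedField 𝕜]
    [CompleteSpace 𝕜] {κ : Type*} [Fintype κ] (S : Finset (σ →₀ ℕ))
    (hS : Fintype.card κ < #S) (v : κ → 𝕜 → σ → 𝕜) (z : κ → 𝕜) (n : κ → ℕ)
    (hv : ∀ q i, AnalyticAt 𝕜 (fun w => v q w i) (z q)) :
    ∃ F : MvPolynomial σ 𝕜, IsUnitPolynomial F ∧ (F.support : Set (σ →₀ ℕ)) ⊆ S ∧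
      ∀ q, iteratedDeriv (n q) (fun w => eval (v q w) F) (z q) = 0 := by
  have hsmooth (F : MvPolynomial σ 𝕜) (q : κ) :
      ContDiffAt 𝕜 (n q) (fun w => eval (v q w) F) (z q) :=
    (AnalyticAt.aeval_mvPolynomial (hv q) F).contDiffAt
  let Φ : MvPolynomial σ 𝕜 →ₗ[𝕜] κ → 𝕜 :=
    { toFun := fun F q => iteratedDeriv (n q) (fun w => eval (v q w) F) (z q)
      map_add' := fun F G => funext fun q => by
        simp only [map_add, Pi.add_apply]
        exact iteratedDeriv_fun_add (hsmooth F q) (hsmooth G q)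
      map_smul' := fun a F => funext fun q => by
        simpa only [smul_eval, RingHom.id_apply, Pi.smul_apply, smul_eq_mul] using
          iteratedDeriv_fun_const_smul_field a (fun w => eval (v q w) F) }
  let W := restrictSupport 𝕜 (S : Set (σ →₀ ℕ))
  have : FiniteDimensional 𝕜 W := (basisRestrictSupport 𝕜 _).finiteDimensional_of_finite
  have hdim : Module.finrank 𝕜 (κ → 𝕜) < Module.finrank 𝕜 W := by
    rwa [Module.finrank_fintype_fun_eq_card,
      Module.finrank_eq_nat_card_basis (basisRestrictSupport 𝕜 _), Nat.card_coe_set_eq,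
      Set.ncard_coe_finset]
  obtain ⟨⟨F, hFS⟩, hker, hF0⟩ := Submodule.exists_mem_ne_zero_of_ne_bot
    (LinearMap.ker_ne_bot_of_finrank_lt (f := Φ.domRestrict W) hdim)
  obtain ⟨a, ha⟩ := exists_smul_isUnitPolynomial (by simpa using hF0)
  have hΦ : Φ (a • F) = 0 := by
    rw [map_smul]
    simpa [smul_eq_zero] using Or.inr hker
  exact ⟨a • F, ha, support_smul.trans hFS, congrFun hΦ⟩

theorem norm_eval_le [NormedField 𝕜] {F : MvPolynomial σ 𝕜} (hF : ∀ m, ‖F.coeff m‖ ≤ 1)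
    {A : ℝ} (hA : 1 ≤ A) {x : σ → 𝕜} (hx : ∀ i, ‖x i‖ ≤ A) :
    ‖eval x F‖ ≤ #F.support * A ^ F.totalDegree := by
  rw [eval_eq, ← nsmul_eq_mul, ← sum_const]
  refine (norm_sum_le _ _).trans (sum_le_sum fun m hm => ?_)
  calc ‖F.coeff m * ∏ i ∈ m.support, x i ^ m i‖ ≤ 1 * ∏ i ∈ m.support, A ^ m i := by
        rw [norm_mul, norm_prod]
        gcongr with i
        · exact hF m
        · rw [norm_pow]
          exact pow_le_pow_left₀ (norm_nonneg _) (hx i) _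
    _ = A ^ (m.sum fun _ e => e) := by rw [one_mul, prod_pow_eq_pow_sum, Finsupp.sum]
    _ ≤ A ^ F.totalDegree := pow_le_pow_right₀ hA (le_totalDegree hm)

theorem norm_eval_comp_le_of_iteratedDeriv_eq_zero {F : MvPolynomial σ ℂ}
    (hF : ∀ m, ‖F.coeff m‖ ≤ 1) {v : ℂ → σ → ℂ} {c ζ : ℂ} {R A : ℝ} {s : ℕ} (hR : 0 < R)
    (hv : ∀ i, AnalyticOnNhd ℂ (fun w => v w i) (closedBall c R)) (hA : 1 ≤ A)
    (hvA : ∀ w ∈ closedBall c R, ∀ i, ‖v w i‖ ≤ A)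
    (hs : ∀ n < s, iteratedDeriv n (fun w => eval (v w) F) c = 0) (hζ : ‖ζ - c‖ ≤ R / 2) :
    ‖eval (v ζ) F‖ ≤ 2 * (#F.support * A ^ F.totalDegree) * (1 / 2) ^ s := by
  have hbound := norm_le_of_iteratedDeriv_eq_zero_s13 (ζ := ζ) hR
    (AnalyticOnNhd.aeval_mvPolynomial hv F).differentiableOn
    (fun w hw => norm_eval_le hF hA (hvA w (sphere_subset_closedBall hw))) hs
    (by norm_num : (1 / 2 : ℝ) < 1) (by linarith)
  refine hbound.trans (le_of_eq ?_)
  ring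

end UnitPolynomial

noncomputable def bidegreeMonomials (d e : ℕ) : Finset (Fin 2 →₀ ℕ) :=
  Iic (Finsupp.single 0 d + Finsupp.single 1 e)

theorem mem_bidegreeMonomials {d e : ℕ} {m : Fin 2 →₀ ℕ} :
    m ∈ bidegreeMonomials d e ↔ m 0 ≤ d ∧ m 1 ≤ e := by
  simp [bidegreeMonomials, Finsupp.le_def, Fin.forall_fin_two]

theorem card_bidegreeMonomials (d e : ℕ) : #(bidegreeMonomials d e) = (d + 1) * (e + 1) := by
  rw [bidegreeMonomials, Finsupp.card_Iic, prod_subset (subset_univ _) fun i _ hi => ?_,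
    Fin.prod_univ_two]
  · simp
  · simp [Finsupp.notMem_support_iff.1 hi]

theorem totalDegree_le_of_support_subset_bidegreeMonomials {R : Type*} [CommSemiring R]
    {d e : ℕ} {F : MvPolynomial (Fin 2) R} (hF : F.support ⊆ bidegreeMonomials d e) :
    F.totalDegree ≤ d + e := by
  refine Finset.sup_le fun m hm => ?_
  obtain ⟨h0, h1⟩ := mem_bidegreeMonomials.1 (hF hm)
  rw [Finsupp.sum_fintype _ _ (fun _ => rfl), Fin.sum_univ_two]
  omega

theorem IsCompact.exists_one_le_norm_le {X ι σ E : Type*} [TopologicalSpace X] [Fintype ι]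
    [Fintype σ] [NormedAddCommGroup E] {L : Set X} (hL : IsCompact L) {v : ι → X → σ → E}
    (hv : ∀ k i, ContinuousOn (fun w => v k w i) L) :
    ∃ A : ℝ, 1 ≤ A ∧ ∀ k, ∀ w ∈ L, ∀ i, ‖v k w i‖ ≤ A := by
  obtain ⟨B, hB⟩ := hL.exists_bound_of_continuousOn (f := fun w k => v k w)
    (continuousOn_pi.2 fun k => continuousOn_pi.2 (hv k))
  exact ⟨max B 1, le_max_right _ _, fun k w hw i =>
    ((norm_le_pi_norm (v k w) i).trans (norm_le_pi_norm (fun k => v k w) k)).trans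
      ((hB w hw).trans (le_max_left _ _))⟩

theorem mul_mul_div_lt_succ_mul_succ (N c d e : ℕ) :
    N * (c * (d * e / (N * (c + 1)))) < (d + 1) * (e + 1) :=
  calc N * (c * (d * e / (N * (c + 1)))) ≤ N * ((c + 1) * (d * e / (N * (c + 1)))) := by
        gcongr
        omega
    _ = d * e / (N * (c + 1)) * (N * (c + 1)) := by ring
    _ ≤ d * e := Nat.div_mul_le_self _ _
    _ < (d + 1) * (e + 1) := by nlinarith

theorem half_pow_div_le (n q : ℕ) :
    (1 / 2 : ℝ) ^ (n / q) ≤ 2 * (1 / 2 : ℝ) ^ ((n : ℝ) / q) := by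
  have hlt : (n : ℝ) / q < (n / q : ℕ) + 1 := by
    rw [← Nat.floor_div_eq_div (K := ℝ)]
    exact Nat.lt_floor_add_one _
  calc (1 / 2 : ℝ) ^ (n / q) = 2 * (1 / 2 : ℝ) ^ (((n / q : ℕ) : ℝ) + 1) := by
        rw [Real.rpow_add_one (by norm_num), Real.rpow_natCast]
        ring
    _ ≤ 2 * (1 / 2 : ℝ) ^ ((n : ℝ) / q) :=
        mul_le_mul_of_nonneg_left
          (Real.rpow_le_rpow_of_exponent_ge (by norm_num) (by norm_num) hlt.le) zero_le_two

theorem four_mul_succ_mul_succ_le {d e : ℕ} (h : 0 < d + e) :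
    4 * ((d + 1) * (e + 1)) ≤ 8 ^ (d + e) :=
  calc 4 * ((d + 1) * (e + 1)) ≤ 4 * (2 ^ d * 2 ^ e) := by
        gcongr <;> exact Nat.lt_two_pow_self
    _ = 2 ^ (d + e + 2) := by ring
    _ ≤ 2 ^ (3 * (d + e)) := Nat.pow_le_pow_right (by norm_num) (by omega)
    _ = 8 ^ (d + e) := by rw [pow_mul]; norm_num

theorem two_mul_mul_half_pow_div_le {a b d e : ℕ} {A : ℝ} (hA : 1 ≤ A)
    (ha : a ≤ (d + 1) * (e + 1)) (hb : b ≤ d + e) (hde : 0 < d + e) (N p : ℕ) :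
    2 * (a * A ^ b) * (1 / 2 : ℝ) ^ (d * e / (N * p)) ≤
      (8 * A) ^ (d + e) * ((1 / 2 : ℝ) ^ (p : ℝ)⁻¹) ^ ((d * e : ℝ) / N) :=
  calc 2 * (a * A ^ b) * (1 / 2 : ℝ) ^ (d * e / (N * p))
      ≤ 2 * ((((d + 1) * (e + 1) : ℕ) : ℝ) * A ^ (d + e)) *
          (2 * (1 / 2 : ℝ) ^ (((d * e : ℕ) : ℝ) / (N * p : ℕ))) := by
        gcongr
        exact half_pow_div_le _ _
    _ = ((4 * ((d + 1) * (e + 1)) : ℕ) : ℝ) * A ^ (d + e) *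
          ((1 / 2 : ℝ) ^ (p : ℝ)⁻¹) ^ ((d * e : ℝ) / N) := by
        rw [← Real.rpow_mul (by norm_num)]
        push_cast
        ring_nf
    _ ≤ ((8 ^ (d + e) : ℕ) : ℝ) * A ^ (d + e) *
          ((1 / 2 : ℝ) ^ (p : ℝ)⁻¹) ^ ((d * e : ℝ) / N) := by
        gcongr
        exact four_mul_succ_mul_succ_le hde
    _ = (8 * A) ^ (d + e) * ((1 / 2 : ℝ) ^ (p : ℝ)⁻¹) ^ ((d * e : ℝ) / N) := by
        push_cast
        ring

theorem stmt_13_general (Ω : Set ℂ) (hΩ : IsOpen Ω)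
    (K : Set ℂ) (hK : IsCompact K) (hKΩ : K ⊆ Ω)
    (N : ℕ)
    (f g : Fin N → ℂ → ℂ)
    (hf : ∀ k, DifferentiableOn ℂ (f k) Ω) (hg : ∀ k, DifferentiableOn ℂ (g k) Ω) :
    ∃ r C : ℝ, 0 < r ∧ r < 1 ∧ 0 < C ∧ ∀ d e : ℕ, 0 < d → 0 < e → N < d + e →
      ∃ F : MvPolynomial (Fin 2) ℂ,
        ((∀ m, ‖F.coeff m‖ ≤ 1) ∧ ∃ m, ‖F.coeff m‖ = 1) ∧
        (∀ m ∈ F.support, m 0 ≤ d ∧ m 1 ≤ e) ∧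
        ∀ k, ∀ ζ ∈ K, ‖MvPolynomial.eval ![f k ζ, g k ζ] F‖ ≤
          C ^ (d + e) * r ^ ((d * e : ℝ) / N) := by
  set v : Fin N → ℂ → Fin 2 → ℂ := fun k w => ![f k w, g k w]
  have hv : ∀ k i, AnalyticOnNhd ℂ (fun w => v k w i) Ω := fun k i => by
    fin_cases i
    exacts [(hf k).analyticOnNhd hΩ, (hg k).analyticOnNhd hΩ]
  obtain ⟨δ, hδ, hδΩ⟩ := hK.exists_cthickening_subset_open hΩ hKΩ
  obtain ⟨A, hA1, hA⟩ := (hK.cthickening (r := δ)).exists_one_le_norm_le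
    fun k i => (hv k i).continuousOn.mono hδΩ
  obtain ⟨t, htK, hcov⟩ := hK.elim_nhds_subcover (fun z => ball z (δ / 2))
    fun z _ => ball_mem_nhds z (half_pos hδ)
  refine ⟨(1 / 2) ^ ((#t + 1 : ℕ) : ℝ)⁻¹, 8 * A, by positivity,
    Real.rpow_lt_one (by norm_num) (by norm_num) (by positivity), by positivity,
    fun d e _ _ hde => ?_⟩
  obtain ⟨F, hunit, hFS, hvan⟩ := exists_isUnitPolynomial_iteratedDeriv_eq_zero
    (κ := Fin N × t × Fin (d * e / (N * (#t + 1)))) (bidegreeMonomials d e)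
    (by simpa [card_bidegreeMonomials] using mul_mul_div_lt_succ_mul_succ N #t d e)
    (fun q => v q.1) (fun q => q.2.1) (fun q => q.2.2)
    fun q i => hv q.1 i _ (hKΩ (htK _ q.2.1.2))
  refine ⟨F, hunit, fun m hm => mem_bidegreeMonomials.1 (hFS hm), fun k ζ hζ => ?_⟩
  obtain ⟨j, hj, hζj⟩ := Set.mem_iUnion₂.1 (hcov hζ)
  have hball : closedBall j δ ⊆ cthickening δ K := closedBall_subset_cthickening (htK j hj) δ
  refine (norm_eval_comp_le_of_iteratedDeriv_eq_zero hunit.1 hδ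
    (fun i => (hv k i).mono (hball.trans hδΩ)) hA1 (fun w hw => hA k w (hball hw))
    (fun n hn => hvan (k, ⟨j, hj⟩, ⟨n, hn⟩)) (mem_ball_iff_norm.1 hζj).le).trans ?_
  exact two_mul_mul_half_pow_div_le hA1 (card_bidegreeMonomials d e ▸ card_le_card hFS)
    (totalDegree_le_of_support_subset_bidegreeMonomials hFS) (by omega) N (#t + 1)

/-- Version of Bishop's lemma for N pairs of holomorphic functions. -/
theorem stmt_13 (Ω : Set ℂ) (hΩ : IsOpen Ω) (hconn : IsConnected Ω)
    (hbdd : Bornology.IsBounded Ω)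
    (K : Set ℂ) (hK : IsCompact K) (hKΩ : K ⊆ Ω)
    (N : ℕ) (hN : 0 < N)
    (f g : Fin N → ℂ → ℂ)
    (hf : ∀ k, DifferentiableOn ℂ (f k) Ω) (hg : ∀ k, DifferentiableOn ℂ (g k) Ω) :
    ∃ r C : ℝ, 0 < r ∧ r < 1 ∧ 0 < C ∧ ∀ d e : ℕ, 0 < d → 0 < e → N < d + e →
      ∃ F : MvPolynomial (Fin 2) ℂ,
        ((∀ m, ‖F.coeff m‖ ≤ 1) ∧ ∃ m, ‖F.coeff m‖ = 1) ∧
        (∀ m ∈ F.support, m 0 ≤ d ∧ m 1 ≤ e) ∧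
        ∀ k, ∀ ζ ∈ K, ‖MvPolynomial.eval ![f k ζ, g k ζ] F‖ ≤
          C ^ (d + e) * r ^ ((d * e : ℝ) / N) :=
  stmt_13_general Ω hΩ K hK hKΩ N f g hf hg
end
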